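/- arXiv:1210.6747 — 3 statements merged into one kernel-verified Lean document; each statement's English description precedes it below -/
import Mathlib

section
/- Let X be a metric space and n ∈ ℕ. Then asdim(X) ≤ n if and only if for every r > 0 there exist D > 0 and a coloring χ : X → Fin (n+1) such that every χ-monochrome r-chain C ⊆ X has diameter at most D. -/
open Metric Set

/-- A subset `L` of a metric space is *large* if some `r`-neighborhood of `L` is the whole space. -/
def IsLarge {X : Type*} [MetricSpace X] (L : Set X) : Prop :=
  ∃ r > (0 : ℝ), ∀ x : X, ∃ y ∈ L, dist x y < r

/-- A subset `A` of a metric space is *small* if for every large set `L` the set `L \\ A` is large. -/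
def IsSmall {X : Type*} [MetricSpace X] (A : Set X) : Prop :=
  ∀ L : Set X, IsLarge L → IsLarge (L \ A)

/-- `AsdimLE X n` means the asymptotic dimension of `X` is at most `n`: for every `r > 0`
there are `D > 0` and a cover of `X` by sets of diameter at most `D` such that every open
`r`-ball meets at most `n + 1` members of the cover. -/
def AsdimLE (X : Type*) [MetricSpace X] (n : ℕ) : Prop :=
  ∀ r > (0 : ℝ), ∃ D > (0 : ℝ), ∃ U : Set (Set X),
    ⋃₀ U = univ ∧
    (∀ u ∈ U, EMetric.diam u ≤ ENNReal.ofReal D) ∧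
    ∀ x : X, {u ∈ U | (u ∩ Metric.ball x r).Nonempty}.Finite ∧
      {u ∈ U | (u ∩ Metric.ball x r).Nonempty}.ncard ≤ n + 1

/-- A map between metric spaces is *coarse* if it maps pairs at bounded distance to
pairs at bounded distance. -/
def IsCoarseMap {X Y : Type*} [MetricSpace X] [MetricSpace Y] (f : X → Y) : Prop :=
  ∀ R > (0 : ℝ), ∃ S > (0 : ℝ), ∀ x x' : X, dist x x' ≤ R → dist (f x) (f x') ≤ S

/-- A coarse map `f : X → Y` is a *coarse equivalence* if it has a coarse inverse up to
uniformly bounded distance. -/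
def IsCoarseEquiv {X Y : Type*} [MetricSpace X] [MetricSpace Y] (f : X → Y) : Prop :=
  IsCoarseMap f ∧ ∃ g : Y → X, IsCoarseMap g ∧
    (∃ C : ℝ, ∀ x : X, dist x (g (f x)) ≤ C) ∧
    (∃ C : ℝ, ∀ y : Y, dist y (f (g y)) ≤ C)

/-- A list of points is an `r`-chain if consecutive points are at distance at most `r`. -/
def IsRChain {X : Type*} [MetricSpace X] (r : ℝ) (l : List X) : Prop :=
  l.Chain' (fun a b => dist a b ≤ r)

/-- A list of points is monochrome with respect to a coloring `χ` if `χ` is constant on it. -/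
def Monochrome {X : Type*} {n : ℕ} (χ : X → Fin (n + 1)) (l : List X) : Prop :=
  ∀ x ∈ l, ∀ y ∈ l, χ x = χ y

/-!
Monochrome `r`-chains are exactly the chains of the relation "same colour and distance at most
`r`", so the colouring condition says that the classes of its reflexive-transitive closure are
uniformly bounded. Given a colouring at scale `2r`, these classes cover `X`, and a ball of radius
`r` meets at most one class of each colour.

Conversely, let `U` be a uniformly bounded cover such that every ball of radius `(n + 2) r` meets
at most `n + 1` members. For each `x`, the sets `N_j(x)` of members meeting `ball x ((j + 1) r)`,
`j = 0, …, n + 1`, increase from a nonempty set to one with at most `n + 1` elements, so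
`N_j(x) = N_{j+1}(x)` for some `j(x) ≤ n`. Put `F(x) = N_{j(x)}(x)`; if `dist x y ≤ r` and
`j(x) ≤ j(y)` then `F(x) ⊆ N_{j(x)+1}(y) ⊆ N_{j(y)+1}(y) = F(y)`. Colouring `x` by `#F(x) - 1`,
`F` is constant along monochrome `r`-chains, which therefore stay within `(n + 2) r` of a single
member of `U`.
-/

open Relation

section Chains

variable {X : Type*} [MetricSpace X] {n : ℕ}

def MonochromeStep (χ : X → Fin (n + 1)) (r : ℝ) (a b : X) : Prop :=
  χ a = χ b ∧ dist a b ≤ r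

instance (χ : X → Fin (n + 1)) (r : ℝ) : Std.Symm (MonochromeStep χ r) :=
  ⟨fun a b h => ⟨h.1.symm, dist_comm a b ▸ h.2⟩⟩

variable {χ : X → Fin (n + 1)} {r : ℝ}

theorem isChain_monochromeStep_iff {l : List X} :
    l.IsChain (MonochromeStep χ r) ↔ IsRChain r l ∧ Monochrome χ l := by
  refine ⟨fun h => ⟨h.imp fun _ _ => And.right, ?_⟩,
    fun ⟨hr, hm⟩ => hr.imp_of_mem_imp fun a b ha hb hab => ⟨hm a ha b hb, hab⟩⟩
  cases l with
  | nil => simp [Monochrome]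
  | cons a l =>
    have hχa := h.induction (χ · = χ a) _ (fun _ _ hxy hx => hxy.1.symm.trans hx) fun _ => rfl
    exact fun x hx y hy => (hχa x hx).trans (hχa y hy).symm

theorem forall_monochrome_chain_ediam_le_iff {C : ENNReal} :
    (∀ l : List X, IsRChain r l → Monochrome χ l → ediam ({x | x ∈ l} : Set X) ≤ C) ↔
      ∀ a b, ReflTransGen (MonochromeStep χ r) a b → edist a b ≤ C := by
  refine ⟨fun h a b hab => ?_, fun h l hr hm => ?_⟩
  · obtain ⟨l, hl, hlast⟩ := List.exists_isChain_cons_of_relationReflTransGen hab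
    obtain ⟨hr, hm⟩ := isChain_monochromeStep_iff.1 hl
    exact (edist_le_ediam_of_mem (s := {x | x ∈ a :: l}) List.mem_cons_self
      (hlast ▸ List.getLast_mem _)).trans (h _ hr hm)
  · cases l with
    | nil => simp
    | cons a l =>
      have hrel := (isChain_monochromeStep_iff.2 ⟨hr, hm⟩).induction (ReflTransGen _ a ·) _
        (fun _ _ hxy hx => hx.tail hxy) fun _ => .refl
      exact ediam_le fun x hx y hy => h x y ((symm (hrel x hx)).trans (hrel y hy))

end Chains

theorem Set.exists_eq_succ_of_ncard_le {α : Type*} {S : ℕ → Set α} (hS : Monotone S)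
    (h₀ : (S 0).Nonempty) : ∀ {n : ℕ}, (S (n + 1)).Finite → (S (n + 1)).ncard ≤ n + 1 →
      ∃ j ≤ n, S j = S (j + 1)
  | 0, hfin, hcard => by
    have := (ncard_pos (hfin.subset (hS zero_le_one))).2 h₀
    exact ⟨0, le_rfl, eq_of_subset_of_ncard_le (hS zero_le_one) (by omega) hfin⟩
  | n + 1, hfin, hcard => by
    by_cases h : S (n + 1) = S (n + 1 + 1)
    · exact ⟨n + 1, le_rfl, h⟩
    · have hsub := hS (Nat.le_add_right (n + 1) 1)
      have := ncard_lt_ncard (ssubset_of_subset_of_ne hsub h) hfin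
      obtain ⟨j, hj, hSj⟩ := exists_eq_succ_of_ncard_le hS h₀ (hfin.subset hsub) (by omega)
      exact ⟨j, by omega, hSj⟩

section Cover

variable {X : Type*} [MetricSpace X]

def meetingBall (U : Set (Set X)) (x : X) (ρ : ℝ) : Set (Set X) :=
  {u ∈ U | (u ∩ ball x ρ).Nonempty}

variable {U : Set (Set X)} {x y : X} {ρ σ r : ℝ}

theorem meetingBall_mono (h : ρ ≤ σ) : meetingBall U x ρ ⊆ meetingBall U x σ :=
  fun _ ⟨hu, hne⟩ => ⟨hu, hne.mono (inter_subset_inter_right _ (ball_subset_ball h))⟩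

theorem meetingBall_subset_of_dist_le (h : dist x y ≤ r) :
    meetingBall U x ρ ⊆ meetingBall U y (ρ + r) :=
  fun _ ⟨hu, hne⟩ => ⟨hu, hne.mono (inter_subset_inter_right _ (ball_subset_ball' (by linarith)))⟩

theorem meetingBall_nonempty (hcover : ⋃₀ U = univ) (hρ : 0 < ρ) :
    (meetingBall U x ρ).Nonempty := by
  obtain ⟨u, hu, hx⟩ := sUnion_eq_univ_iff.1 hcover x
  exact ⟨u, hu, x, hx, mem_ball_self hρ⟩

theorem dist_le_of_inter_ball_nonempty {u : Set X} {D : ℝ} (hD : 0 ≤ D)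
    (hu : ediam u ≤ ENNReal.ofReal D) (hx : (u ∩ ball x ρ).Nonempty)
    (hy : (u ∩ ball y ρ).Nonempty) : dist x y ≤ 2 * ρ + D := by
  obtain ⟨x', hx'u, hxx'⟩ := hx
  obtain ⟨y', hy'u, hyy'⟩ := hy
  have hx'y' := (edist_le_ofReal hD).1 ((edist_le_ediam_of_mem hx'u hy'u).trans hu)
  rw [mem_ball'] at hxx' hyy'
  linarith [dist_triangle4 x x' y' y, dist_comm y y']

theorem exists_comparable_selection {n : ℕ} (hr : 0 < r) (hcover : ⋃₀ U = univ)
    (hfin : ∀ x, (meetingBall U x ((n + 2) * r)).Finite)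
    (hcard : ∀ x, (meetingBall U x ((n + 2) * r)).ncard ≤ n + 1) :
    ∃ F : X → Set (Set X), (∀ x, (F x).Nonempty ∧ F x ⊆ meetingBall U x ((n + 2) * r)) ∧
      ∀ x y, dist x y ≤ r → F x ⊆ F y ∨ F y ⊆ F x := by
  have hgap : ∀ x, ∃ j ≤ n, meetingBall U x ((j + 2) * r) ⊆ meetingBall U x ((j + 1) * r) := by
    intro x
    set S : ℕ → Set (Set X) := fun j => meetingBall U x ((j + 1) * r) with hS
    have hmono : Monotone S := fun i j hij => meetingBall_mono (by gcongr)
    have hS₀ : (S 0).Nonempty := meetingBall_nonempty hcover (by simpa using hr)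
    have hSsucc j : S (j + 1) = meetingBall U x ((j + 2) * r) := by
      simp only [hS]; push_cast; ring_nf
    obtain ⟨j, hj, hSj⟩ := Set.exists_eq_succ_of_ncard_le hmono hS₀ (hSsucc n ▸ hfin x)
      (hSsucc n ▸ hcard x)
    exact ⟨j, hj, ((hSsucc j).symm.trans hSj.symm).subset⟩
  choose j hjn hgap using hgap
  have hnested : ∀ x y, dist x y ≤ r → j x ≤ j y →
      meetingBall U x ((j x + 1) * r) ⊆ meetingBall U y ((j y + 1) * r) := by
    intro x y hxy hj
    have hj' : (j x : ℝ) ≤ j y := by exact_mod_cast hj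
    calc meetingBall U x ((j x + 1) * r)
        ⊆ meetingBall U y ((j x + 1) * r + r) := meetingBall_subset_of_dist_le hxy
      _ ⊆ meetingBall U y ((j y + 2) * r) := meetingBall_mono (by nlinarith)
      _ ⊆ meetingBall U y ((j y + 1) * r) := hgap y
  refine ⟨fun x => meetingBall U x ((j x + 1) * r),
    fun x => ⟨meetingBall_nonempty hcover (by positivity), meetingBall_mono ?_⟩,
    fun x y hxy => (le_total (j x) (j y)).imp (hnested x y hxy)
      (hnested y x (dist_comm x y ▸ hxy))⟩
  have : (j x : ℝ) ≤ n := by exact_mod_cast hjn x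
  gcongr
  linarith

end Cover

theorem exists_coloring_of_comparable {X β : Type*} [MetricSpace X] {n : ℕ} {r : ℝ}
    {F : X → Set β} (hfin : ∀ x, (F x).Finite) (hne : ∀ x, (F x).Nonempty)
    (hcard : ∀ x, (F x).ncard ≤ n + 1) (hcomp : ∀ x y, dist x y ≤ r → F x ⊆ F y ∨ F y ⊆ F x) :
    ∃ χ : X → Fin (n + 1), ∀ x y, MonochromeStep χ r x y → F x = F y := by
  refine ⟨fun x => ⟨(F x).ncard - 1, by have := hcard x; omega⟩, fun x y ⟨hχ, hxy⟩ => ?_⟩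
  have hcard_eq : (F x).ncard = (F y).ncard := by
    have := (ncard_pos (hfin x)).2 (hne x)
    have := (ncard_pos (hfin y)).2 (hne y)
    have := congrArg Fin.val hχ
    dsimp only at this
    omega
  rcases hcomp x y hxy with h | h
  · exact eq_of_subset_of_ncard_le h hcard_eq.ge (hfin y)
  · exact (eq_of_subset_of_ncard_le h hcard_eq.le (hfin x)).symm

theorem AsdimLE.exists_coloring {X : Type*} [MetricSpace X] {n : ℕ} (h : AsdimLE X n)
    {r : ℝ} (hr : 0 < r) : ∃ D > (0 : ℝ), ∃ χ : X → Fin (n + 1),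
      ∀ a b, ReflTransGen (MonochromeStep χ r) a b → edist a b ≤ ENNReal.ofReal D := by
  obtain ⟨D, hD, U, hcover, hdiam, hmult⟩ := h ((n + 2) * r) (by positivity)
  obtain ⟨F, hF, hcomp⟩ := exists_comparable_selection hr hcover (fun x => (hmult x).1)
    fun x => (hmult x).2
  have hfin x : (F x).Finite := (hmult x).1.subset (hF x).2
  obtain ⟨χ, hχ⟩ := exists_coloring_of_comparable hfin (fun x => (hF x).1)
    (fun x => (ncard_le_ncard (hF x).2 (hmult x).1).trans (hmult x).2) hcomp
  refine ⟨2 * ((n + 2) * r) + D, by positivity, χ, fun a b hab => ?_⟩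
  have hFab : F a = F b := by
    induction hab with
    | refl => rfl
    | tail _ hbc ih => exact ih.trans (hχ _ _ hbc)
  obtain ⟨u, hu⟩ := (hF a).1
  obtain ⟨huU, hua⟩ := (hF a).2 hu
  rw [edist_le_ofReal (by positivity)]
  exact dist_le_of_inter_ball_nonempty hD.le (hdiam u huU) hua ((hF b).2 (hFab ▸ hu)).2

theorem asdimLE_of_coloring {X : Type*} [MetricSpace X] {n : ℕ}
    (H : ∀ r > (0 : ℝ), ∃ D > (0 : ℝ), ∃ χ : X → Fin (n + 1),
      ∀ a b, ReflTransGen (MonochromeStep χ r) a b → edist a b ≤ ENNReal.ofReal D) :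
    AsdimLE X n := by
  intro r hr
  obtain ⟨D, hD, χ, hχ⟩ := H (2 * r) (by positivity)
  set cls : X → Set X := fun a => {b | ReflTransGen (MonochromeStep χ (2 * r)) a b}
  refine ⟨D, hD, range cls, sUnion_eq_univ_iff.2 fun x => ⟨cls x, mem_range_self x, .refl⟩,
    ?_, fun x => ?_⟩
  · rintro _ ⟨a, rfl⟩
    exact ediam_le fun b hb c hc => hχ b c ((symm hb).trans hc)
  have : Nonempty X := ⟨x⟩
  choose! y hy using fun u (hu : u ∈ meetingBall (range cls) x r) => hu.2
  have hinj : InjOn (χ ∘ y) (meetingBall (range cls) x r) := by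
    rintro _ ⟨⟨a₁, rfl⟩, hne₁⟩ _ ⟨⟨a₂, rfl⟩, hne₂⟩ hχy
    obtain ⟨hy₁, hy₁x⟩ := hy _ ⟨mem_range_self a₁, hne₁⟩
    obtain ⟨hy₂, hy₂x⟩ := hy _ ⟨mem_range_self a₂, hne₂⟩
    have hstep : MonochromeStep χ (2 * r) (y (cls a₁)) (y (cls a₂)) := by
      rw [mem_ball] at hy₁x hy₂x
      exact ⟨hχy, by linarith [dist_triangle_right (y (cls a₁)) (y (cls a₂)) x]⟩
    have h₁₂ : ReflTransGen _ a₁ a₂ := (hy₁.tail hstep).trans (symm hy₂)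
    ext b
    exact ⟨(symm h₁₂).trans, h₁₂.trans⟩
  refine ⟨Finite.of_finite_image (toFinite _) hinj, ?_⟩
  exact (ncard_le_ncard_of_injOn _ (fun _ _ => mem_univ _) hinj).trans_eq (by simp)

theorem asdim_iff_coloring {X : Type*} [MetricSpace X] (n : ℕ) :
    AsdimLE X n ↔
      ∀ r > (0 : ℝ), ∃ D > (0 : ℝ), ∃ χ : X → Fin (n + 1),
        ∀ l : List X, IsRChain r l → Monochrome χ l →
          EMetric.diam {x | x ∈ l} ≤ ENNReal.ofReal D := by
  refine ⟨fun h r hr => ?_, fun H => asdimLE_of_coloring fun r hr => ?_⟩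
  · obtain ⟨D, hD, χ, hχ⟩ := h.exists_coloring hr
    exact ⟨D, hD, χ, forall_monochrome_chain_ediam_le_iff.2 hχ⟩
  · obtain ⟨D, hD, χ, hχ⟩ := H r hr
    exact ⟨D, hD, χ, forall_monochrome_chain_ediam_le_iff.1 hχ⟩
end

section
/- Let X be a metric space, A ⊆ X, and r > 0. Then A is small in X if and only if the r-neighborhood B(A,r) = ⋃_{a∈A} B(a,r) is small in X. -/
open Metric Set

/-! Since `A ⊆ B(A,r)`, smallness of `B(A,r)` passes down to `A`. Conversely, if `L` is large
then so is `(L \ B(A,r)) ∪ A`, with the radius enlarged by `r`: a point of `L` lost in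
`B(A,r)` is replaced by a point of `A` less than `r` away. Removing `A` from this large set
leaves a subset of `L \ B(A,r)`, which is therefore large. -/

section

variable {X : Type*} [MetricSpace X]

theorem IsLarge.mono {L L' : Set X} (hL : IsLarge L) (hLL' : L ⊆ L') : IsLarge L' := by
  obtain ⟨s, hs, hLs⟩ := hL
  exact ⟨s, hs, fun x => (hLs x).imp fun y ⟨hyL, hxy⟩ => ⟨hLL' hyL, hxy⟩⟩

theorem IsSmall.mono {A B : Set X} (hB : IsSmall B) (hAB : A ⊆ B) : IsSmall A :=
  fun L hL => (hB L hL).mono (sdiff_subset_sdiff_right hAB)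

theorem IsLarge.diff_union_of_subset_biUnion_ball {L N A : Set X} {r : ℝ} (hL : IsLarge L)
    (hr : 0 ≤ r) (hN : N ⊆ ⋃ a ∈ A, ball a r) : IsLarge (L \ N ∪ A) := by
  obtain ⟨s, hs, hLs⟩ := hL
  refine ⟨s + r, by linarith, fun x => ?_⟩
  obtain ⟨y, hyL, hxy⟩ := hLs x
  by_cases hyN : y ∈ N
  · obtain ⟨a, haA, hya⟩ := mem_iUnion₂.mp (hN hyN)
    refine ⟨a, Or.inr haA, ?_⟩
    calc dist x a ≤ dist x y + dist y a := dist_triangle x y a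
      _ < s + r := add_lt_add hxy (mem_ball.mp hya)
  · exact ⟨y, Or.inl ⟨hyL, hyN⟩, by linarith⟩

end

theorem small_iff_neighborhood_small {X : Type*} [MetricSpace X] (A : Set X) (r : ℝ)
    (hr : 0 < r) :
    IsSmall A ↔ IsSmall (⋃ a ∈ A, Metric.ball a r) := by
  refine ⟨fun hA L hL => ?_, fun hN => hN.mono fun a ha => mem_biUnion ha (mem_ball_self hr)⟩
  have hLarge := hA _ <|
    hL.diff_union_of_subset_biUnion_ball (N := ⋃ a ∈ A, ball a r) hr.le subset_rfl
  rw [union_sdiff_right] at hLarge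
  exact hLarge.mono sdiff_subset
end

section
/- Let G be a group equipped with a proper left-invariant metric and let A ⊆ G be a subset that is not small. Then for every n ∈ ℕ, asdim(A) ≤ n if and only if asdim(G) ≤ n (i.e. A has the same asymptotic dimension as G). -/
/-!
Since `A` is not small, some `r₀`-dense set `L` has points `x` arbitrarily far from `L \ A`, so `A`
is `r₀`-dense in arbitrarily large balls `x B(1, R)`. By left invariance, moving each
`g ∈ B(1, R)` to a point of `A` near `x g` distorts distances by at most `2 r₀`, so a cover of `A`
of bounded multiplicity pulls back to a good cover of `B(1, R)`. These covers, for
`R = 0, 1, 2, …`, are glued along a nonprincipal ultrafilter: `g` and `h` lie in the same piece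
when their pulled-back pieces agree for almost all `R`.
-/

open Metric Set

open Filter

theorem Set.encard_image_le_of_forall_injOn {α β : Type*} {f : α → β} {S : Set α} {m : ℕ}
    (h : ∀ t : Finset α, ↑t ⊆ S → InjOn f t → t.card ≤ m) : (f '' S).encard ≤ m := by
  obtain ⟨s, hsS, hbij⟩ := S.exists_subset_bijOn f
  rw [← hbij.image_eq, hbij.injOn.encard_image]
  by_contra! hlt
  obtain ⟨t, hts, htcard⟩ := exists_subset_encard_eq (Order.add_one_le_of_lt hlt)
  have htfin : t.Finite := finite_of_encard_eq_coe (k := m + 1) (by simpa using htcard)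
  have hcard :=
    h htfin.toFinset (by simpa using hts.trans hsS) (by simpa using hbij.injOn.mono hts)
  rw [← htfin.cast_ncard_eq, ncard_eq_toFinset_card t htfin] at htcard
  norm_cast at htcard
  omega

theorem Ultrafilter.eventually_injOn_of_injOn_germ {ι α β : Type*} (𝒰 : Ultrafilter ι)
    (ℓ : ι → α → β) {s : Finset α}
    (hs : InjOn (fun x => ((fun k => ℓ k x : ι → β) : Germ (𝒰 : Filter ι) β)) s) :
    ∀ᶠ k in 𝒰, InjOn (ℓ k) s := by
  have hpair : ∀ x ∈ s, ∀ y ∈ s, ∀ᶠ k in 𝒰, ℓ k x = ℓ k y → x = y := by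
    intro x hx y hy
    by_cases hxy : x = y
    · exact Eventually.of_forall fun _ _ => hxy
    · have hne : ¬ ∀ᶠ k in 𝒰, ℓ k x = ℓ k y := fun h => hxy (hs hx hy (Germ.coe_eq.2 h))
      exact (Ultrafilter.eventually_not.2 hne).mono fun k hk h => absurd h hk
  filter_upwards [(eventually_all_finset s).2 fun x hx => (eventually_all_finset s).2 (hpair x hx)]
    with k hk x hx y hy using hk x hx y hy

section Labeling

variable {X : Type*} [MetricSpace X] {n : ℕ}

/-- The level sets of such a `c` form a cover as in `AsdimLE` for the radius `r`. -/
def IsAsdimLabeling {γ : Type*} (c : X → γ) (r D : ℝ) (n : ℕ) : Prop :=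
  (∀ x y, c x = c y → dist x y ≤ D) ∧ ∀ z, (c '' ball z r).encard ≤ n + 1

theorem AsdimLE.exists_isAsdimLabeling (h : AsdimLE X n) {r : ℝ} (hr : 0 < r) :
    ∃ D > 0, ∃ c : X → Set X, IsAsdimLabeling c r D n := by
  obtain ⟨D, hD, U, hcov, hdiam, hmult⟩ := h r hr
  choose c hcU hxc using sUnion_eq_univ_iff.1 hcov
  refine ⟨D, hD, c, fun x y hxy => ?_, fun z => ?_⟩
  · have := (edist_le_ediam_of_mem (hxc x) (hxy ▸ hxc y)).trans (hdiam _ (hcU x))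
    rwa [edist_dist, ENNReal.ofReal_le_ofReal_iff hD.le] at this
  · obtain ⟨hfin, hcard⟩ := hmult z
    calc (c '' ball z r).encard ≤ {u ∈ U | (u ∩ ball z r).Nonempty}.encard :=
          encard_le_encard (by rintro _ ⟨x, hx, rfl⟩; exact ⟨hcU x, x, hxc x, hx⟩)
      _ = _ := hfin.cast_ncard_eq.symm
      _ ≤ n + 1 := by exact_mod_cast hcard

theorem AsdimLE.of_isAsdimLabeling {γ : Type*}
    (h : ∀ r > 0, ∃ D > 0, ∃ c : X → γ, IsAsdimLabeling c r D n) : AsdimLE X n := by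
  intro r hr
  obtain ⟨D, hD, c, hc_diam, hc_mult⟩ := h r hr
  refine ⟨D, hD, range fun x => c ⁻¹' {c x}, ?_, ?_, fun z => ?_⟩
  · exact sUnion_eq_univ_iff.2 fun x => ⟨_, mem_range_self x, rfl⟩
  · rintro _ ⟨x, rfl⟩
    refine ediam_le fun y hy y' hy' => ?_
    rw [edist_dist]
    exact ENNReal.ofReal_le_ofReal (hc_diam y y' (hy.trans hy'.symm))
  · have hsub : {u ∈ range (fun x => c ⁻¹' {c x}) | (u ∩ ball z r).Nonempty} ⊆
        (fun v => c ⁻¹' {v}) '' (c '' ball z r) := by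
      rintro _ ⟨⟨x, rfl⟩, y, hy, hyz⟩
      exact ⟨c y, mem_image_of_mem c hyz, by rw [show c y = c x from hy]⟩
    refine encard_le_coe_iff_finite_ncard_le.1 ?_
    calc _ ≤ _ := encard_le_encard hsub
      _ ≤ _ := encard_image_le _ _
      _ ≤ _ := hc_mult z
      _ = ((n + 1 : ℕ) : ℕ∞) := by push_cast; rfl

theorem AsdimLE.of_isometry {Y : Type*} [MetricSpace Y] {f : X → Y} (hf : Isometry f)
    (h : AsdimLE Y n) : AsdimLE X n := by
  refine AsdimLE.of_isAsdimLabeling (γ := Set Y) fun r hr => ?_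
  obtain ⟨D, hD, c, hc_diam, hc_mult⟩ := h.exists_isAsdimLabeling hr
  refine ⟨D, hD, c ∘ f, fun x y hxy => (hf.dist_eq x y).symm ▸ hc_diam _ _ hxy, fun z => ?_⟩
  calc ((c ∘ f) '' ball z r).encard ≤ (c '' ball (f z) r).encard := by
        rw [image_comp]; exact encard_le_encard (image_mono (hf.mapsTo_ball z r).image_subset)
    _ ≤ n + 1 := hc_mult (f z)

theorem AsdimLE.of_forall_closedBall_almostIsometric {Y : Type*} [MetricSpace Y]
    (hY : AsdimLE Y n) (x₀ : X) (C : ℝ) (h : ∀ R : ℝ, ∃ f : X → Y, ∀ x ∈ closedBall x₀ R,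
      ∀ y ∈ closedBall x₀ R, |dist (f x) (f y) - dist x y| ≤ C) :
    AsdimLE X n := by
  choose f hf using fun k : ℕ => h k
  have hC : 0 ≤ C := (abs_nonneg _).trans <|
    hf 0 x₀ (mem_closedBall_self (Nat.cast_nonneg 0)) x₀ (mem_closedBall_self (Nat.cast_nonneg 0))
  let 𝒰 := hyperfilter ℕ
  have hlarge (R : ℝ) : ∀ᶠ k : ℕ in 𝒰, R ≤ k :=
    Nat.hyperfilter_le_atTop (tendsto_natCast_atTop_atTop.eventually_ge_atTop R)
  refine AsdimLE.of_isAsdimLabeling (γ := Germ (𝒰 : Filter ℕ) (Set Y)) fun r hr => ?_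
  obtain ⟨D, hD, c, hc_diam, hc_mult⟩ :=
    hY.exists_isAsdimLabeling (add_pos_of_pos_of_nonneg hr hC)
  let ℓ (k : ℕ) (x : X) : Set Y := c (f k x)
  let L (x : X) : Germ (𝒰 : Filter ℕ) (Set Y) := ((fun k => ℓ k x : ℕ → Set Y) : Germ _ _)
  refine ⟨D + C, by positivity, L, fun x y hxy => ?_, fun z => ?_⟩
  · obtain ⟨k, hk, hxk, hyk⟩ :=
      ((Germ.coe_eq.1 hxy).and ((hlarge (dist x x₀)).and (hlarge (dist y x₀)))).exists
    have := (abs_sub_le_iff.1 (hf k x hxk y hyk)).2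
    linarith [hc_diam _ _ hk]
  · suffices ∀ s : Finset X, ↑s ⊆ ball z r → InjOn L s → s.card ≤ n + 1 by
      exact_mod_cast encard_image_le_of_forall_injOn this
    intro s hs hinj
    obtain ⟨k, hk, hzk⟩ :=
      ((𝒰.eventually_injOn_of_injOn_germ ℓ hinj).and (hlarge (r + dist z x₀))).exists
    have hball : ball z r ⊆ closedBall x₀ k := fun x hx => by
      rw [mem_ball] at hx; rw [mem_closedBall]; linarith [dist_triangle x z x₀]
    have hmaps : MapsTo (f k) s (ball (f k z) (r + C)) := fun x hx => by
      have hxz := hs hx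
      rw [mem_ball] at hxz ⊢
      linarith [(abs_sub_le_iff.1 (hf k x (hball hxz) z (hball (mem_ball_self hr)))).1]
    have hcard : (s.card : ℕ∞) ≤ n + 1 := calc
      (s.card : ℕ∞) = (c ∘ f k '' s).encard :=
        (encard_coe_eq_coe_finsetCard s).symm.trans hk.encard_image.symm
      _ ≤ (c '' ball (f k z) (r + C)).encard := by
        rw [image_comp]; exact encard_le_encard (image_mono hmaps.image_subset)
      _ ≤ n + 1 := hc_mult _
    exact_mod_cast hcard

end Labeling

theorem exists_forall_closedBall_near_of_not_isSmall {X : Type*} [MetricSpace X] {A : Set X}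
    (hA : ¬ IsSmall A) :
    ∃ r₀ : ℝ, ∀ R : ℝ, ∃ x : X, ∀ y ∈ closedBall x R, ∃ a ∈ A, dist y a < r₀ := by
  simp only [IsSmall, not_forall] at hA
  obtain ⟨L, ⟨r₀, hr₀, hL⟩, hLA⟩ := hA
  refine ⟨r₀, fun R => ?_⟩
  obtain ⟨x, hx⟩ : ∃ x, ∀ l ∈ L \ A, |R| + r₀ ≤ dist x l := by
    by_contra! hnear
    exact hLA ⟨_, by positivity, hnear⟩
  refine ⟨x, fun y hy => ?_⟩
  obtain ⟨l, hlL, hyl⟩ := hL y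
  refine ⟨l, by_contra fun hlA => ?_, hyl⟩
  rw [mem_closedBall] at hy
  linarith [hx l ⟨hlL, hlA⟩, dist_triangle x y l, dist_comm x y, le_abs_self R]

theorem exists_forall_closedBall_almostIsometric_of_not_isSmall {G : Type*} [Group G]
    [MetricSpace G] (hinv : ∀ z x y : G, dist (z * x) (z * y) = dist x y) {A : Set G}
    (hA : ¬ IsSmall A) : ∃ C : ℝ, ∀ R : ℝ, ∃ f : G → A, ∀ g ∈ closedBall 1 R,
      ∀ h ∈ closedBall 1 R, |dist (f g) (f h) - dist g h| ≤ C := by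
  obtain ⟨r₀, hr₀⟩ := exists_forall_closedBall_near_of_not_isSmall hA
  obtain ⟨x₀, hx₀⟩ := hr₀ 0
  obtain ⟨a₀, ha₀, -⟩ := hx₀ x₀ (mem_closedBall_self le_rfl)
  refine ⟨2 * r₀, fun R => ?_⟩
  obtain ⟨x, hx⟩ := hr₀ R
  have hnear (g : G) : ∃ a : A, g ∈ closedBall 1 R → dist (x * g) a < r₀ := by
    by_cases hg : g ∈ closedBall 1 R
    · obtain ⟨a, ha, hd⟩ := hx (x * g) (by rwa [mem_closedBall, ← hinv x, mul_one] at hg)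
      exact ⟨⟨a, ha⟩, fun _ => hd⟩
    · exact ⟨⟨a₀, ha₀⟩, fun h => absurd h hg⟩
  choose f hf using hnear
  refine ⟨f, fun g hg h hh => abs_sub_le_iff.2 ⟨?_, ?_⟩⟩ <;>
  · rw [Subtype.dist_eq, ← hinv x g h]
    linarith [hf g hg, hf h hh, dist_comm (x * g) (f g : G), dist_comm (x * h) (f h : G),
      dist_triangle4 (f g : G) (x * g) (x * h) (f h : G),
      dist_triangle4 (x * g) (f g : G) (f h : G) (x * h)]

theorem asdim_eq_of_not_small_general (G : Type*) [Group G] [MetricSpace G]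
    (hinv : ∀ z x y : G, dist (z * x) (z * y) = dist x y)
    (A : Set G) (hA : ¬ IsSmall A) (n : ℕ) :
    AsdimLE ↥A n ↔ AsdimLE G n := by
  refine ⟨fun hAn => ?_, fun hG => hG.of_isometry isometry_subtype_coe⟩
  obtain ⟨C, hC⟩ := exists_forall_closedBall_almostIsometric_of_not_isSmall hinv hA
  exact hAn.of_forall_closedBall_almostIsometric 1 C hC

theorem asdim_eq_of_not_small (G : Type*) [Group G] [MetricSpace G]
    (hinv : ∀ z x y : G, dist (z * x) (z * y) = dist x y)
    (hproper : ∀ (x : G) (R : ℝ), IsCompact (Metric.closedBall x R))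
    (A : Set G) (hA : ¬ IsSmall A) (n : ℕ) :
    AsdimLE ↥A n ↔ AsdimLE G n :=
  asdim_eq_of_not_small_general G hinv A hA n
end
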